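/- arXiv:2402.09287 — 6 statements merged into one kernel-verified Lean document; each statement's English description precedes it below -/
import Mathlib

section
/- For every n ≥ 1 and f ∈ L²[0,1], (Re Vⁿ)f(x) = (1/2)∫₀¹ |x−t|^{n−1}/(n−1)! · f(t) dt for almost every x ∈ [0,1], where Re Vⁿ := (Vⁿ + V*ⁿ)/2. -/
open MeasureTheory Complex ContinuousLinearMap

noncomputable section

abbrev E : Type := Lp ℂ 2 (volume.restrict (Set.Icc (0:ℝ) 1))

def IsVolterra (V : E →L[ℂ] E) : Prop :=
  ∀ f : E, ∀ᵐ x ∂(volume.restrict (Set.Icc (0:ℝ) 1)),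
    (V f : ℝ → ℂ) x = ∫ t in (0:ℝ)..x, (f : ℝ → ℂ) t

/-! The powers of `V` and their adjoints are integral operators with bounded kernels. Composing
kernels shows inductively that `Vⁿ⁺¹` has the kernel `𝟙[t ≤ x] (x - t)ⁿ / n!` (Cauchy's formula
for repeated integration), and by Fubini the adjoint of an integral operator has the conjugate
transposed kernel. Off the diagonal, which is null, the two kernels add up to `|x - t|ⁿ / n!`. -/

open Function Set ComplexConjugate
open scoped Nat

section IntegralKernel

variable {α 𝕜 : Type*} [MeasurableSpace α] [RCLike 𝕜] {μ : Measure α}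

def IsBoundedKernel (μ : Measure α) (k : α → α → 𝕜) : Prop :=
  AEStronglyMeasurable (uncurry k) (μ.prod μ) ∧ ∃ C, ∀ᵐ p ∂μ.prod μ, ‖uncurry k p‖ ≤ C

def HasIntegralKernel (T : Lp 𝕜 2 μ →L[𝕜] Lp 𝕜 2 μ) (k : α → α → 𝕜) : Prop :=
  ∀ f : Lp 𝕜 2 μ, ∀ᵐ x ∂μ, (T f : α → 𝕜) x = ∫ t, k x t * (f : α → 𝕜) t ∂μ

namespace IsBoundedKernel

variable {k : α → α → 𝕜}

lemma adjoint [SFinite μ] (hk : IsBoundedKernel μ k) :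
    IsBoundedKernel μ (fun x t => conj (k t x)) := by
  obtain ⟨hmeas, C, hC⟩ := hk
  refine ⟨RCLike.continuous_conj.comp_aestronglyMeasurable hmeas.prod_swap, C, ?_⟩
  simpa [uncurry] using Measure.measurePreserving_swap.quasiMeasurePreserving.ae hC

lemma integrable_mul_prod [SFinite μ] (hk : IsBoundedKernel μ k) {f g : α → 𝕜}
    (hf : Integrable f μ) (hg : Integrable g μ) :
    Integrable (fun p : α × α => k p.1 p.2 * (g p.1 * f p.2)) (μ.prod μ) := by
  obtain ⟨hmeas, C, hC⟩ := hk
  exact (hg.mul_prod hf).bdd_mul hmeas hC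

lemma ae_integrable_mul [IsFiniteMeasure μ] (hk : IsBoundedKernel μ k) {f : α → 𝕜}
    (hf : Integrable f μ) : ∀ᵐ x ∂μ, Integrable (fun t => k x t * f t) μ := by
  simpa using (hk.integrable_mul_prod hf (integrable_const 1)).prod_right_ae

end IsBoundedKernel

namespace HasIntegralKernel

variable {T S : Lp 𝕜 2 μ →L[𝕜] Lp 𝕜 2 μ} {k l : α → α → 𝕜}

lemma congr (hT : HasIntegralKernel T k) (hkl : ∀ᵐ x ∂μ, ∀ᵐ t ∂μ, k x t = l x t) :
    HasIntegralKernel T l := by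
  intro f
  filter_upwards [hT f, hkl] with x hx hklx
  rw [hx]
  exact integral_congr_ae (by filter_upwards [hklx] with t ht; rw [ht])

lemma add [IsFiniteMeasure μ] (hT : HasIntegralKernel T k) (hS : HasIntegralKernel S l)
    (hk : IsBoundedKernel μ k) (hl : IsBoundedKernel μ l) : HasIntegralKernel (T + S) (k + l) := by
  intro f
  have hf := (Lp.memLp f).integrable (by norm_num)
  filter_upwards [Lp.coeFn_add (T f) (S f), hT f, hS f, hk.ae_integrable_mul hf,
    hl.ae_integrable_mul hf] with x hadd hTx hSx hkx hlx
  simp only [add_apply, hadd, Pi.add_apply, hTx, hSx, add_mul, integral_add hkx hlx]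

lemma mul [IsFiniteMeasure μ] (hT : HasIntegralKernel T k) (hS : HasIntegralKernel S l)
    (hk : IsBoundedKernel μ k) (hl : IsBoundedKernel μ l) :
    HasIntegralKernel (T * S) (fun x t => ∫ s, k x s * l s t ∂μ) := by
  intro f
  obtain ⟨hkmeas, C, hC⟩ := hk
  have hlf := hl.integrable_mul_prod ((Lp.memLp f).integrable (by norm_num))
    (integrable_const (1 : 𝕜))
  filter_upwards [hT (S f), hkmeas.prodMk_left, Measure.ae_ae_of_ae_prod hC] with x hx hkx hCx
  have hint : Integrable (fun p : α × α => k x p.1 * (l p.1 p.2 * f p.2)) (μ.prod μ) := by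
    simpa using hlf.bdd_mul hkx.comp_fst (Measure.quasiMeasurePreserving_fst.ae hCx)
  rw [mul_apply_eq_comp, hx]
  calc ∫ s, k x s * S f s ∂μ = ∫ s, ∫ t, k x s * (l s t * f t) ∂μ ∂μ := by
        refine integral_congr_ae ?_
        filter_upwards [hS f] with s hs
        rw [hs, integral_const_mul]
    _ = ∫ t, ∫ s, k x s * (l s t * f t) ∂μ ∂μ := integral_integral_swap hint
    _ = ∫ t, (∫ s, k x s * l s t ∂μ) * f t ∂μ := by
        simp_rw [← integral_mul_const, mul_assoc]

lemma adjoint [IsFiniteMeasure μ] (hT : HasIntegralKernel T k) (hk : IsBoundedKernel μ k) :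
    HasIntegralKernel (ContinuousLinearMap.adjoint T) (fun x t => conj (k t x)) := by
  intro g
  have hg := (Lp.memLp g).integrable (by norm_num)
  obtain ⟨hmeas, C, hC⟩ := hk.adjoint
  set G : α → 𝕜 := fun x => ∫ t, conj (k t x) * g t ∂μ
  have hG : MemLp G 2 μ := by
    refine MemLp.of_bound (hmeas.mul hg.1.comp_snd).integral_prod_right'
      (C * ∫ t, ‖g t‖ ∂μ) ?_
    filter_upwards [Measure.ae_ae_of_ae_prod hC] with x hx
    calc ‖G x‖ ≤ ∫ t, C * ‖g t‖ ∂μ := by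
          refine norm_integral_le_of_norm_le (hg.norm.const_mul C) ?_
          filter_upwards [hx] with t ht
          rw [norm_mul]
          exact mul_le_mul_of_nonneg_right ht (norm_nonneg _)
      _ = C * ∫ t, ‖g t‖ ∂μ := integral_const_mul _ _
  suffices ContinuousLinearMap.adjoint T g = hG.toLp G by rw [this]; exact hG.coeFn_toLp
  refine ext_inner_left 𝕜 fun f => ?_
  have hint :
      Integrable (fun p : α × α => conj (k p.2 p.1) * (conj (f p.1) * g p.2)) (μ.prod μ) :=
    hk.adjoint.integrable_mul_prod hg ((Lp.memLp f).star.integrable (by norm_num))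
  rw [adjoint_inner_right, L2.inner_def, L2.inner_def]
  simp only [RCLike.inner_apply']
  calc ∫ x, conj (T f x) * g x ∂μ = ∫ x, ∫ t, conj (k x t) * (conj (f t) * g x) ∂μ ∂μ := by
        refine integral_congr_ae ?_
        filter_upwards [hT f] with x hx
        rw [hx, ← integral_conj, ← integral_mul_const]
        simp only [map_mul, mul_assoc]
    _ = ∫ t, ∫ x, conj (k x t) * (conj (f t) * g x) ∂μ ∂μ := (integral_integral_swap hint).symm
    _ = ∫ t, conj (f t) * hG.toLp G t ∂μ := by
        refine integral_congr_ae ?_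
        filter_upwards [hG.coeFn_toLp] with t ht
        rw [ht, ← integral_const_mul]
        simp only [mul_left_comm]

end HasIntegralKernel

end IntegralKernel

def volterraKernel (n : ℕ) (x t : ℝ) : ℂ :=
  if t ≤ x then ((x - t) ^ n : ℝ) / (n ! : ℂ) else 0

lemma norm_volterraKernel_le_one {n : ℕ} {x t : ℝ} (hx : x ≤ 1) (ht : 0 ≤ t) :
    ‖volterraKernel n x t‖ ≤ 1 := by
  unfold volterraKernel
  split_ifs with htx
  · rw [norm_div, norm_real, norm_natCast,
      Real.norm_of_nonneg (pow_nonneg (sub_nonneg.2 htx) n)]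
    exact div_le_one_of_le₀ ((pow_le_one₀ (sub_nonneg.2 htx) (by linarith)).trans
      (Nat.one_le_cast.2 (Nat.factorial_pos n))) (Nat.cast_nonneg _)
  · simp

lemma isBoundedKernel_volterraKernel (n : ℕ) :
    IsBoundedKernel (volume.restrict (Icc (0 : ℝ) 1)) (volterraKernel n) := by
  refine ⟨Measurable.aestronglyMeasurable ?_, 1, ?_⟩
  · exact Measurable.ite (measurableSet_le measurable_snd measurable_fst) (by fun_prop)
      measurable_const
  · rw [Measure.prod_restrict]
    filter_upwards [ae_restrict_mem (measurableSet_Icc.prod measurableSet_Icc)] with p hp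
    exact norm_volterraKernel_le_one hp.1.2 hp.2.1

lemma conj_volterraKernel (n : ℕ) (x t : ℝ) :
    conj (volterraKernel n x t) = volterraKernel n x t := by
  unfold volterraKernel
  split_ifs <;> simp

lemma volterraKernel_add_swap {n : ℕ} {x t : ℝ} (h : x ≠ t) :
    volterraKernel n x t + volterraKernel n t x = ((|x - t| ^ n : ℝ) : ℂ) / (n ! : ℂ) := by
  unfold volterraKernel
  rcases h.lt_or_gt with h | h
  · simp [h.not_ge, h.le, abs_of_neg (sub_neg.2 h)]
  · simp [h.not_ge, h.le, abs_of_pos (sub_pos.2 h)]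

lemma integral_volterraKernel_zero_mul {x : ℝ} (hx : x ∈ Icc (0 : ℝ) 1) (h : ℝ → ℂ) :
    ∫ t in Icc (0 : ℝ) 1, volterraKernel 0 x t * h t = ∫ t in (0 : ℝ)..x, h t := by
  have hind : ∀ t, volterraKernel 0 x t * h t = (Iic x).indicator h t := by
    intro t
    unfold volterraKernel
    split_ifs with htx <;> simp [htx]
  have hset : Icc (0 : ℝ) 1 ∩ Iic x = Icc 0 x := by
    ext t
    exact ⟨fun ht => ⟨ht.1.1, ht.2⟩, fun ht => ⟨⟨ht.1, ht.2.trans hx.2⟩, ht.2⟩⟩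
  simp_rw [hind]
  rw [setIntegral_indicator measurableSet_Iic, hset, integral_Icc_eq_integral_Ioc,
    intervalIntegral.integral_of_le hx.1]

lemma integral_volterraKernel_mul_volterraKernel {n : ℕ} {x t : ℝ} (hx : x ≤ 1) (ht : 0 ≤ t) :
    ∫ s in Icc (0 : ℝ) 1, volterraKernel 0 x s * volterraKernel n s t =
      volterraKernel (n + 1) x t := by
  have hind : ∀ s, volterraKernel 0 x s * volterraKernel n s t =
      (Icc t x).indicator (fun s => ((s - t) ^ n : ℝ) / (n ! : ℂ)) s := by
    intro s
    unfold volterraKernel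
    by_cases hsx : s ≤ x <;> by_cases hts : t ≤ s <;> simp [hsx, hts]
  simp_rw [hind]
  rw [setIntegral_indicator measurableSet_Icc, inter_eq_right.2 (Icc_subset_Icc ht hx),
    integral_Icc_eq_integral_Ioc]
  unfold volterraKernel
  split_ifs with htx
  · rw [← intervalIntegral.integral_of_le htx, intervalIntegral.integral_div,
      intervalIntegral.integral_ofReal, intervalIntegral.integral_comp_sub_right (· ^ n), sub_self,
      integral_pow]
    push_cast [Nat.factorial_succ]
    field_simp
    ring
  · rw [Ioc_eq_empty_of_le (not_le.1 htx).le, Measure.restrict_empty, integral_zero_measure]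

lemma IsVolterra.hasIntegralKernel {V : E →L[ℂ] E} (hV : IsVolterra V) :
    HasIntegralKernel V (volterraKernel 0) := by
  intro f
  filter_upwards [hV f, ae_restrict_mem measurableSet_Icc] with x hx hxI
  rw [hx, integral_volterraKernel_zero_mul hxI]

lemma IsVolterra.hasIntegralKernel_pow {V : E →L[ℂ] E} (hV : IsVolterra V) :
    ∀ n : ℕ, HasIntegralKernel (V ^ (n + 1)) (volterraKernel n)
  | 0 => by simpa using hV.hasIntegralKernel
  | n + 1 => by
    rw [pow_succ']
    refine (hV.hasIntegralKernel.mul (hV.hasIntegralKernel_pow n)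
      (isBoundedKernel_volterraKernel 0) (isBoundedKernel_volterraKernel n)).congr ?_
    filter_upwards [ae_restrict_mem measurableSet_Icc] with x hx
    filter_upwards [ae_restrict_mem measurableSet_Icc] with t ht
    exact integral_volterraKernel_mul_volterraKernel hx.2 ht.1

theorem volterra_re_pow (V : E →L[ℂ] E) (hV : IsVolterra V) (n : ℕ) (hn : 1 ≤ n) (f : E) :
    ∀ᵐ x ∂(volume.restrict (Set.Icc (0:ℝ) 1)),
      (((2:ℂ)⁻¹ • (V ^ n + ContinuousLinearMap.adjoint (V ^ n))) f : ℝ → ℂ) x =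
        (1/2 : ℂ) * ∫ t in Set.Icc (0:ℝ) 1,
          ((|x - t| ^ (n - 1) : ℝ) : ℂ) / (Nat.factorial (n - 1)) * (f : ℝ → ℂ) t := by
  obtain ⟨m, rfl⟩ := Nat.exists_eq_add_of_le' hn
  have hk := isBoundedKernel_volterraKernel m
  have hVm := hV.hasIntegralKernel_pow m
  filter_upwards [Lp.coeFn_smul (2 : ℂ)⁻¹ ((V ^ (m + 1) + adjoint (V ^ (m + 1))) f),
    (hVm.add (hVm.adjoint hk) hk hk.adjoint) f] with x hsmul hx
  rw [smul_apply, hsmul, Pi.smul_apply, hx, smul_eq_mul, one_div, Nat.add_sub_cancel]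
  congr 1
  refine integral_congr_ae ?_
  filter_upwards [Measure.ae_ne _ x] with t ht
  rw [Pi.add_apply, Pi.add_apply, conj_volterraKernel, volterraKernel_add_swap ht.symm]
end
end

section
/- If n is odd, then the real part Re Vⁿ = (Vⁿ + V*ⁿ)/2 of the n-th power of the Volterra operator has at most n non-zero eigenvalues. -/
open MeasureTheory Complex ContinuousLinearMap

noncomputable section

/-!
Integration by parts (Fubini over the triangles `t < x` and `x ≤ t` of the unit square) gives
`V* = P - V`, where `P = ⟪1, ·⟫ 1` is the rank-one operator onto the constants. For odd `n` this
turns `Vⁿ + V*ⁿ` into `(P - V)ⁿ - (-V)ⁿ`; every term of the expansion of `(P - V)ⁿ` other than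
`(-V)ⁿ` has the form `(-V)ᵏ P (⋯)` with `k < n`, so the range lies in the span of
`1, V1, …, Vⁿ⁻¹1`. Eigenvectors for nonzero eigenvalues lie in the range and are linearly
independent, so there are at most `n` of them.
-/

open Set Submodule
open scoped ComplexConjugate InnerProductSpace

namespace Module.End

section Eigenvalues

variable {K M : Type*} [Field K] [AddCommGroup M] [Module K M]

theorem HasEigenvector.mem_range_of_ne_zero {T : End K M} {μ : K} {x : M}
    (hx : T.HasEigenvector μ x) (hμ : μ ≠ 0) : x ∈ LinearMap.range T :=
  ⟨μ⁻¹ • x, by rw [map_smul, hx.apply_eq_smul, smul_smul, inv_mul_cancel₀ hμ, one_smul]⟩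

theorem finite_nonzero_eigenvalues_and_ncard_le_of_range_le {T : End K M} {U : Submodule K M}
    [FiniteDimensional K U] (hT : LinearMap.range T ≤ U) :
    {μ : K | μ ≠ 0 ∧ T.HasEigenvalue μ}.Finite ∧
      {μ : K | μ ≠ 0 ∧ T.HasEigenvalue μ}.ncard ≤ finrank K U := by
  set S := {μ : K | μ ≠ 0 ∧ T.HasEigenvalue μ}
  choose x hx using fun μ : S => μ.2.2.exists_hasEigenvector
  have hxU : ∀ μ : S, x μ ∈ U := fun μ => hT ((hx μ).mem_range_of_ne_zero μ.2.1)
  have hli : LinearIndependent K fun μ => (⟨x μ, hxU μ⟩ : U) :=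
    .of_comp U.subtype (eigenvectors_linearIndependent T S x hx)
  have : Finite S := hli.finite
  have : Fintype S := Fintype.ofFinite S
  refine ⟨S.toFinite, ?_⟩
  rw [← Nat.card_coe_set_eq, Nat.card_eq_fintype_card]
  exact hli.fintype_card_le_finrank

end Eigenvalues

theorem range_sub_pow_sub_neg_pow_le_span {R M : Type*} [Ring R] [AddCommGroup M] [Module R M]
    {A P : End R M} {e : M} (hP : LinearMap.range P ≤ R ∙ e) (m : ℕ) :
    LinearMap.range ((P - A) ^ m - (-A) ^ m) ≤
      span R (range fun k : Fin m => (A ^ (k : ℕ)) e) := by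
  induction m with
  | zero => simp
  | succ m ih =>
    rintro _ ⟨x, rfl⟩
    have hstep : ((P - A) ^ (m + 1) - (-A) ^ (m + 1)) x
        = P (((P - A) ^ m) x) - A (((P - A) ^ m - (-A) ^ m) x) := by
      simp only [pow_succ', mul_apply, LinearMap.sub_apply, LinearMap.neg_apply, map_sub]
      abel
    rw [hstep]
    refine sub_mem (hP.trans ?_ ⟨_, rfl⟩) ?_
    · rw [span_singleton_le_iff_mem]
      exact subset_span ⟨0, by simp⟩
    · refine span_mono ?_ (apply_mem_span_image_of_mem_span A (ih ⟨x, rfl⟩))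
      rintro _ ⟨_, ⟨k, rfl⟩, rfl⟩
      exact ⟨k.succ, by simp [pow_succ', mul_apply]⟩

end Module.End

theorem setIntegral_prod_eq_integral_setIntegral_preimage {α β G : Type*} [MeasurableSpace α]
    [MeasurableSpace β] [NormedAddCommGroup G] [NormedSpace ℝ G] {μ : Measure α} {ν : Measure β}
    [SFinite μ] [SFinite ν] {s : Set (α × β)} (hs : MeasurableSet s) {h : α × β → G}
    (hh : Integrable h (μ.prod ν)) :
    ∫ p in s, h p ∂μ.prod ν = ∫ x, ∫ y in Prod.mk x ⁻¹' s, h (x, y) ∂ν ∂μ := by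
  rw [← integral_indicator hs, integral_prod _ (hh.indicator hs)]
  congr with x
  rw [← integral_indicator (measurable_prodMk_left hs)]
  rfl

section IntervalIntegral

variable {a b : ℝ}

theorem intervalIntegral_eq_setIntegral_Iic {G : Type*} [NormedAddCommGroup G]
    [NormedSpace ℝ G] (f : ℝ → G) {x : ℝ} (hx : x ∈ Icc a b) :
    ∫ t in a..x, f t = ∫ t in Iic x, f t ∂volume.restrict (Ioc a b) := by
  rw [intervalIntegral.integral_of_le hx.1, Measure.restrict_restrict measurableSet_Iic,
    Iic_inter_Ioc_of_le hx.2]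

theorem setIntegral_Icc_eq_intervalIntegral {G : Type*} [NormedAddCommGroup G]
    [NormedSpace ℝ G] (f : ℝ → G) (hab : a ≤ b) :
    ∫ x in Icc a b, f x = ∫ x in a..b, f x := by
  rw [integral_Icc_eq_integral_Ioc, intervalIntegral.integral_of_le hab]

theorem IntervalIntegrable.conj {𝕜 : Type*} [RCLike 𝕜] {f : ℝ → 𝕜} {μ : Measure ℝ}
    (hf : IntervalIntegrable f μ a b) : IntervalIntegrable (fun x => conj (f x)) μ a b :=
  ⟨(RCLike.conjCLE (K := 𝕜)).toContinuousLinearMap.integrable_comp hf.1,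
    (RCLike.conjCLE (K := 𝕜)).toContinuousLinearMap.integrable_comp hf.2⟩

theorem integral_primitive_mul_add_mul_primitive {𝕜 : Type*} [RCLike 𝕜] {f g : ℝ → 𝕜}
    (hab : a ≤ b) (hf : IntervalIntegrable f volume a b) (hg : IntervalIntegrable g volume a b) :
    (∫ x in a..b, (∫ t in a..x, f t) * g x) + ∫ x in a..b, f x * ∫ t in a..x, g t =
      (∫ x in a..b, f x) * ∫ x in a..b, g x := by
  set μ := volume.restrict (Ioc a b)
  rw [intervalIntegrable_iff_integrableOn_Ioc_of_le hab] at hf hg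
  have hIcc : ∀ᵐ x ∂μ, x ∈ Icc a b :=
    ae_restrict_of_forall_mem measurableSet_Ioc fun x hx => Ioc_subset_Icc_self hx
  have hint : Integrable (fun p : ℝ × ℝ => g p.1 * f p.2) (μ.prod μ) := hg.mul_prod hf
  have hlt : MeasurableSet {p : ℝ × ℝ | p.2 < p.1} :=
    measurableSet_lt measurable_snd measurable_fst
  have hA : ∫ x in a..b, (∫ t in a..x, f t) * g x =
      ∫ p in {p | p.2 < p.1}, g p.1 * f p.2 ∂μ.prod μ := by
    rw [setIntegral_prod_eq_integral_setIntegral_preimage hlt hint,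
      intervalIntegral.integral_of_le hab]
    refine integral_congr_ae ?_
    filter_upwards [hIcc] with x hx
    rw [intervalIntegral_eq_setIntegral_Iic f hx, integral_Iic_eq_integral_Iio, mul_comm,
      ← integral_const_mul]
    rfl
  have hB : ∫ x in a..b, f x * ∫ t in a..x, g t =
      ∫ p in {p | p.2 < p.1}ᶜ, g p.1 * f p.2 ∂μ.prod μ := by
    have hle : MeasurableSet {p : ℝ × ℝ | p.2 ≤ p.1} :=
      measurableSet_le measurable_snd measurable_fst
    have hswap : Prod.swap ⁻¹' {p : ℝ × ℝ | p.2 < p.1}ᶜ = {p | p.2 ≤ p.1} := by ext; simp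
    rw [← (Measure.measurePreserving_swap).setIntegral_preimage_emb
      MeasurableEquiv.prodComm.measurableEmbedding]
    simp only [hswap, Prod.fst_swap, Prod.snd_swap, mul_comm (g _)]
    rw [setIntegral_prod_eq_integral_setIntegral_preimage hle (hf.mul_prod hg),
      intervalIntegral.integral_of_le hab]
    refine integral_congr_ae ?_
    filter_upwards [hIcc] with x hx
    rw [intervalIntegral_eq_setIntegral_Iic g hx, ← integral_const_mul]
    rfl
  rw [hA, hB, integral_add_compl hlt hint, intervalIntegral.integral_of_le hab,
    intervalIntegral.integral_of_le hab, mul_comm, integral_prod_mul g f]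

end IntervalIntegral

abbrev oneLp : E := Lp.const 2 (volume.restrict (Icc (0:ℝ) 1)) (1 : ℂ)

theorem inner_eq_intervalIntegral (u v : E) :
    ⟪u, v⟫_ℂ = ∫ x in (0:ℝ)..1, conj ((u : ℝ → ℂ) x) * (v : ℝ → ℂ) x := by
  rw [L2.inner_def, ← setIntegral_Icc_eq_intervalIntegral _ zero_le_one]
  simp only [RCLike.inner_apply']

theorem inner_oneLp_left (v : E) : ⟪oneLp, v⟫_ℂ = ∫ x in (0:ℝ)..1, (v : ℝ → ℂ) x := by
  rw [L2.inner_def, ← setIntegral_Icc_eq_intervalIntegral _ zero_le_one]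
  refine integral_congr_ae ?_
  filter_upwards [Lp.coeFn_const 2 (volume.restrict (Icc (0:ℝ) 1)) (1 : ℂ)] with x hx
  rw [RCLike.inner_apply', hx]
  simp

theorem intervalIntegrable_coeFn (u : E) : IntervalIntegrable (u : ℝ → ℂ) volume 0 1 := by
  rw [intervalIntegrable_iff_integrableOn_Ioc_of_le zero_le_one]
  exact IntegrableOn.mono_set ((Lp.memLp u).integrable one_le_two) Ioc_subset_Icc_self

namespace IsVolterra

variable {V : E →L[ℂ] E}

theorem inner_apply_left (hV : IsVolterra V) (f g : E) :
    ⟪V f, g⟫_ℂ = ∫ x in (0:ℝ)..1, (∫ t in (0:ℝ)..x, conj ((f : ℝ → ℂ) t)) * (g : ℝ → ℂ) x := by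
  rw [inner_eq_intervalIntegral]
  refine intervalIntegral.integral_congr_ae ?_
  filter_upwards [(ae_restrict_iff' measurableSet_Icc).1 (hV f)] with x hx hx01
  rw [hx (Ioc_subset_Icc_self (by simpa using hx01)), intervalIntegral.intervalIntegral_conj]

theorem inner_apply_right (hV : IsVolterra V) (f g : E) :
    ⟪f, V g⟫_ℂ = ∫ x in (0:ℝ)..1, conj ((f : ℝ → ℂ) x) * ∫ t in (0:ℝ)..x, (g : ℝ → ℂ) t := by
  rw [inner_eq_intervalIntegral]
  refine intervalIntegral.integral_congr_ae ?_
  filter_upwards [(ae_restrict_iff' measurableSet_Icc).1 (hV g)] with x hx hx01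
  rw [hx (Ioc_subset_Icc_self (by simpa using hx01))]

theorem adjoint_eq (hV : IsVolterra V) :
    adjoint V = InnerProductSpace.rankOne ℂ oneLp oneLp - V := by
  refine ((eq_adjoint_iff _ _).2 fun f g => ?_).symm
  rw [sub_apply, inner_sub_left, InnerProductSpace.rankOne_apply, inner_smul_left,
    inner_oneLp_left, inner_oneLp_left, hV.inner_apply_left, hV.inner_apply_right,
    ← intervalIntegral.intervalIntegral_conj, ← integral_primitive_mul_add_mul_primitive
      zero_le_one (intervalIntegrable_coeFn f).conj (intervalIntegrable_coeFn g)]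
  ring

end IsVolterra

theorem re_pow_finitely_many_eigenvalues (V : E →L[ℂ] E) (hV : IsVolterra V)
    (n : ℕ) (hn : Odd n) :
    {μ : ℂ | μ ≠ 0 ∧ Module.End.HasEigenvalue
        (((2:ℂ)⁻¹ • (V ^ n + ContinuousLinearMap.adjoint (V ^ n)) : E →L[ℂ] E) : E →ₗ[ℂ] E) μ}.Finite ∧
    {μ : ℂ | μ ≠ 0 ∧ Module.End.HasEigenvalue
        (((2:ℂ)⁻¹ • (V ^ n + ContinuousLinearMap.adjoint (V ^ n)) : E →L[ℂ] E) : E →ₗ[ℂ] E) μ}.ncard ≤ n := by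
  have hadj := hV.adjoint_eq
  set P := InnerProductSpace.rankOne ℂ oneLp oneLp
  have hre : (((2:ℂ)⁻¹ • (V ^ n + adjoint (V ^ n)) : E →L[ℂ] E) : E →ₗ[ℂ] E)
      = (2:ℂ)⁻¹ • (((P : E →ₗ[ℂ] E) - V) ^ n - (-(V : E →ₗ[ℂ] E)) ^ n) := by
    rw [← star_eq_adjoint, star_pow, star_eq_adjoint, hadj, hn.neg_pow, sub_neg_eq_add, add_comm]
    simp only [toLinearMap_smul, toLinearMap_add, toLinearMap_pow, toLinearMap_sub]
  have hP : LinearMap.range (P : E →ₗ[ℂ] E) ≤ ℂ ∙ oneLp := by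
    rintro _ ⟨f, rfl⟩
    exact mem_span_singleton.2 ⟨_, rfl⟩
  have hrange := (LinearMap.range_smul _ _ (inv_ne_zero two_ne_zero)).le.trans
    (Module.End.range_sub_pow_sub_neg_pow_le_span (A := V) hP n)
  have := FiniteDimensional.span_of_finite ℂ
    (finite_range fun k : Fin n => ((V : E →ₗ[ℂ] E) ^ (k : ℕ)) oneLp)
  rw [hre]
  obtain ⟨hfin, hcard⟩ := Module.End.finite_nonzero_eigenvalues_and_ncard_le_of_range_le hrange
  exact ⟨hfin, hcard.trans ((finrank_range_le_card _).trans (Fintype.card_fin n).le)⟩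
end
end

section
/- If n is even, then the imaginary part Im Vⁿ = (Vⁿ − V*ⁿ)/(2i) of the n-th power of the Volterra operator has at most n non-zero eigenvalues. -/
open MeasureTheory Complex ContinuousLinearMap

noncomputable section

/-!
By Fubini, `⟪V f, g⟫ + ⟪f, V g⟫ = ⟪f, 1⟫ ⟪1, g⟫`, i.e. `V* = -V + P` with `P = ⟪1, ·⟫ 1` of
rank one. A rank-one perturbation of `A` changes `A ^ n` only by an operator with range in the
Krylov space `span {1, A 1, …, A ^ (n - 1) 1}`, of dimension at most `n`. For even `n`,
`Vⁿ - V*ⁿ = (-V)ⁿ - (-V + P)ⁿ` is such a difference, and eigenvectors of `Im Vⁿ` for distinct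
non-zero eigenvalues are linearly independent vectors of its range.
-/

open scoped InnerProductSpace ComplexConjugate

namespace MeasureTheory

theorem Integrable.conj {α 𝕜 : Type*} [MeasurableSpace α] {μ : Measure α} [RCLike 𝕜] {f : α → 𝕜}
    (hf : Integrable f μ) : Integrable (fun x => conj (f x)) μ :=
  RCLike.conjCLE.toContinuousLinearMap.integrable_comp hf

theorem Lp.integrable {α F : Type*} [MeasurableSpace α] {μ : Measure α} [IsFiniteMeasure μ]
    [NormedAddCommGroup F] {p : ENNReal} [Fact (1 ≤ p)] (f : Lp F p μ) : Integrable f μ :=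
  (Lp.memLp f).integrable Fact.out

section Fubini

variable {α β 𝕜 : Type*} [MeasurableSpace α] [MeasurableSpace β] {μ : Measure α} {ν : Measure β}
  [SFinite μ] [SFinite ν] [RCLike 𝕜] {F : β → 𝕜} {G : α → 𝕜} {D : Set (α × β)}

theorem setIntegral_prod_mul_eq_integral_mul_setIntegral_right (hG : Integrable G μ)
    (hF : Integrable F ν) (hD : MeasurableSet D) :
    ∫ q in D, G q.1 * F q.2 ∂μ.prod ν = ∫ x, G x * ∫ y in Prod.mk x ⁻¹' D, F y ∂ν ∂μ := by
  rw [← integral_indicator hD, integral_prod _ ((hG.mul_prod hF).indicator hD)]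
  congr 1 with x
  rw [← integral_const_mul, ← integral_indicator (measurable_prodMk_left hD)]
  rfl

theorem setIntegral_prod_mul_eq_integral_mul_setIntegral_left (hG : Integrable G μ)
    (hF : Integrable F ν) (hD : MeasurableSet D) :
    ∫ q in D, G q.1 * F q.2 ∂μ.prod ν = ∫ y, (∫ x in (·, y) ⁻¹' D, G x ∂μ) * F y ∂ν := by
  rw [← integral_indicator hD, integral_prod_symm _ ((hG.mul_prod hF).indicator hD)]
  congr 1 with y
  rw [← integral_mul_const, ← integral_indicator (measurable_prodMk_right hD)]
  rfl

end Fubini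

end MeasureTheory

namespace Module.End

open LinearMap Module

section Krylov

variable {R M : Type*} [Ring R] [AddCommGroup M] [Module R M]

def krylovSubspace (A : End R M) (u : M) (k : ℕ) : Submodule R M :=
  Submodule.span R (Set.range fun j : Fin k => (A ^ (j : ℕ)) u)

variable (A : End R M) (u : M)

instance (k : ℕ) : Module.Finite R (krylovSubspace A u k) :=
  Module.Finite.span_of_finite R (Set.finite_range _)

theorem finrank_krylovSubspace_le [StrongRankCondition R] (k : ℕ) :
    finrank R (krylovSubspace A u k) ≤ k :=
  (finrank_range_le_card _).trans_eq (Fintype.card_fin k)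

theorem pow_apply_mem_krylovSubspace {j k : ℕ} (hj : j < k) :
    (A ^ j) u ∈ krylovSubspace A u k :=
  Submodule.subset_span ⟨⟨j, hj⟩, rfl⟩

theorem apply_mem_krylovSubspace_succ {k : ℕ} {x : M} (hx : x ∈ krylovSubspace A u k) :
    A x ∈ krylovSubspace A u (k + 1) := by
  have hle : krylovSubspace A u k ≤ (krylovSubspace A u (k + 1)).comap A := by
    refine Submodule.span_le.2 ?_
    rintro _ ⟨j, rfl⟩
    rw [SetLike.mem_coe, Submodule.mem_comap, ← mul_apply, ← pow_succ']
    exact pow_apply_mem_krylovSubspace A u (Nat.succ_lt_succ j.2)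
  exact hle hx

theorem pow_add_apply_sub_pow_apply_mem_krylovSubspace {P : End R M} (hP : ∀ x, P x ∈ R ∙ u)
    (k : ℕ) (x : M) : ((A + P) ^ k) x - (A ^ k) x ∈ krylovSubspace A u k := by
  induction k with
  | zero => simp
  | succ k ih =>
    have hline : R ∙ u ≤ krylovSubspace A u (k + 1) := by
      rw [Submodule.span_singleton_le_iff_mem]
      simpa using pow_apply_mem_krylovSubspace A u k.succ_pos
    have hstep : ((A + P) ^ (k + 1)) x - (A ^ (k + 1)) x
        = A (((A + P) ^ k) x - (A ^ k) x) + P (((A + P) ^ k) x) := by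
      simp only [pow_succ', mul_apply, LinearMap.add_apply, map_sub]
      abel
    rw [hstep]
    exact add_mem (apply_mem_krylovSubspace_succ A u ih) (hline (hP _))

end Krylov

variable {K M : Type*} [Field K] [AddCommGroup M] [Module K M]

theorem HasEigenvector.mem_range {T : End K M} {μ : K} {v : M} (hv : T.HasEigenvector μ v)
    (hμ : μ ≠ 0) : v ∈ range T :=
  ⟨μ⁻¹ • v, by rw [map_smul, hv.apply_eq_smul, inv_smul_smul₀ hμ]⟩

theorem encard_setOf_hasEigenvalue_ne_zero_le (T : End K M) (S : Submodule K M)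
    [FiniteDimensional K S] (hT : range T ≤ S) :
    {μ | μ ≠ 0 ∧ T.HasEigenvalue μ}.encard ≤ finrank K S := by
  set Λ := {μ | μ ≠ 0 ∧ T.HasEigenvalue μ}
  choose v hv using fun μ : Λ => μ.2.2.exists_hasEigenvector
  have hvS (μ : Λ) : v μ ∈ S := hT ((hv μ).mem_range μ.2.1)
  have hli : LinearIndependent K fun μ => (⟨v μ, hvS μ⟩ : S) :=
    .of_comp S.subtype (T.eigenvectors_linearIndependent Λ v hv)
  have : Finite Λ := hli.finite
  have := Fintype.ofFinite Λ
  rw [Set.encard_eq_coe_toFinset_card, Set.toFinset_card]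
  exact_mod_cast hli.fintype_card_le_finrank

end Module.End

section Volterra

open Set

variable {F : Type*} [NormedAddCommGroup F] [NormedSpace ℝ F]

theorem intervalIntegral_eq_setIntegral_Iic_restrict_Icc {f : ℝ → F} {a b x : ℝ}
    (hx : x ∈ Icc a b) : ∫ t in a..x, f t = ∫ t in Iic x, f t ∂volume.restrict (Icc a b) := by
  have hIcc : Iic x ∩ Icc a b = Icc a x := by
    ext t; simp only [mem_inter_iff, mem_Iic, mem_Icc]; grind
  rw [intervalIntegral.integral_of_le hx.1, Measure.restrict_restrict measurableSet_Iic, hIcc,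
    integral_Icc_eq_integral_Ioc]

theorem intervalIntegral_eq_setIntegral_Iio_restrict_Icc {f : ℝ → F} {a b x : ℝ}
    (hx : x ∈ Icc a b) : ∫ t in a..x, f t = ∫ t in Iio x, f t ∂volume.restrict (Icc a b) := by
  have hIco : Iio x ∩ Icc a b = Ico a x := by
    ext t; simp only [mem_inter_iff, mem_Iio, mem_Icc, mem_Ico]; grind
  rw [intervalIntegral.integral_of_le hx.1, Measure.restrict_restrict measurableSet_Iio, hIco,
    integral_Ico_eq_integral_Ioo, integral_Ioc_eq_integral_Ioo]

local notation "μ₀₁" => volume.restrict (Icc (0:ℝ) 1)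

def constOne : E := Lp.const 2 μ₀₁ (1 : ℂ)

theorem inner_constOne_left (f : E) : ⟪constOne, f⟫_ℂ = ∫ t, (f : ℝ → ℂ) t ∂μ₀₁ := by
  rw [constOne, ← indicatorConstLp_univ, L2.inner_indicatorConstLp_one, setIntegral_univ]

theorem inner_constOne_right (f : E) : ⟪f, constOne⟫_ℂ = ∫ t, conj ((f : ℝ → ℂ) t) ∂μ₀₁ := by
  rw [← inner_conj_symm, inner_constOne_left, integral_conj]

variable {V : E →L[ℂ] E}

theorem IsVolterra.inner_apply_left_s4 (hV : IsVolterra V) (f g : E) :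
    ⟪V f, g⟫_ℂ = ∫ q in {q : ℝ × ℝ | q.2 ≤ q.1}, g q.1 * conj (f q.2) ∂(μ₀₁).prod μ₀₁ := by
  rw [L2.inner_def, setIntegral_prod_mul_eq_integral_mul_setIntegral_right (Lp.integrable g)
    (Lp.integrable f).conj (measurableSet_le measurable_snd measurable_fst)]
  refine integral_congr_ae ?_
  filter_upwards [hV f, ae_restrict_mem measurableSet_Icc] with x hVf hx
  rw [RCLike.inner_apply, hVf, intervalIntegral_eq_setIntegral_Iic_restrict_Icc hx,
    ← integral_conj]
  rfl

/-- Writing `V g x` as an integral over `t < x` (rather than `t ≤ x`, as in `inner_apply_left`)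
makes the two triangles complementary, so no null-diagonal argument is needed. -/
theorem IsVolterra.inner_apply_right_s4 (hV : IsVolterra V) (f g : E) :
    ⟪f, V g⟫_ℂ = ∫ q in {q : ℝ × ℝ | q.1 < q.2}, g q.1 * conj (f q.2) ∂(μ₀₁).prod μ₀₁ := by
  rw [L2.inner_def, setIntegral_prod_mul_eq_integral_mul_setIntegral_left (Lp.integrable g)
    (Lp.integrable f).conj (measurableSet_lt measurable_fst measurable_snd)]
  refine integral_congr_ae ?_
  filter_upwards [hV g, ae_restrict_mem measurableSet_Icc] with x hVg hx
  rw [RCLike.inner_apply, hVg, intervalIntegral_eq_setIntegral_Iio_restrict_Icc hx]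
  rfl

theorem IsVolterra.inner_apply_add_inner_apply (hV : IsVolterra V) (f g : E) :
    ⟪V f, g⟫_ℂ + ⟪f, V g⟫_ℂ = ⟪f, constOne⟫_ℂ * ⟪constOne, g⟫_ℂ := by
  have hcompl : {q : ℝ × ℝ | q.1 < q.2} = {q | q.2 ≤ q.1}ᶜ := by ext; simp
  rw [hV.inner_apply_left_s4, hV.inner_apply_right_s4, hcompl,
    integral_add_compl (measurableSet_le measurable_snd measurable_fst)
      ((Lp.integrable g).mul_prod (Lp.integrable f).conj),
    integral_prod_mul (fun x => (g : ℝ → ℂ) x) (fun t => conj ((f : ℝ → ℂ) t)),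
    inner_constOne_left, inner_constOne_right, mul_comm]

theorem IsVolterra.adjoint_eq_s4 (hV : IsVolterra V) :
    adjoint V = -V + InnerProductSpace.rankOne ℂ constOne constOne := by
  ext1 f
  refine ext_inner_right ℂ fun g => ?_
  rw [adjoint_inner_left, add_apply, inner_add_left, InnerProductSpace.rankOne_apply,
    inner_smul_left, inner_conj_symm, ← hV.inner_apply_add_inner_apply, neg_apply, inner_neg_left]
  ring

theorem IsVolterra.pow_sub_adjoint_pow_apply_mem_krylovSubspace (hV : IsVolterra V) {n : ℕ}
    (hn : Even n) (f : E) :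
    (V ^ n - adjoint (V ^ n)) f ∈ Module.End.krylovSubspace (-V : E →ₗ[ℂ] E) constOne n := by
  set P := InnerProductSpace.rankOne ℂ constOne constOne
  have hP (f : E) : P f ∈ ℂ ∙ constOne :=
    Submodule.smul_mem _ _ (Submodule.mem_span_singleton_self _)
  have hpert := Module.End.pow_add_apply_sub_pow_apply_mem_krylovSubspace (-V : E →ₗ[ℂ] E)
    constOne (P := (P : E →ₗ[ℂ] E)) hP n f
  rw [← toLinearMap_neg, ← toLinearMap_add, ← toLinearMap_pow, ← toLinearMap_pow] at hpert
  rw [← star_eq_adjoint, star_pow, star_eq_adjoint, hV.adjoint_eq_s4, ← hn.neg_pow V, sub_apply,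
    ← neg_sub]
  exact neg_mem hpert

end Volterra

open Module.End in
theorem im_pow_finitely_many_eigenvalues_general (V : E →L[ℂ] E) (hV : IsVolterra V)
    (n : ℕ) (hn : Even n) :
    {μ : ℂ | μ ≠ 0 ∧ Module.End.HasEigenvalue
        ((((2 * Complex.I)⁻¹ : ℂ) • (V ^ n - ContinuousLinearMap.adjoint (V ^ n)) : E →L[ℂ] E) : E →ₗ[ℂ] E) μ}.Finite ∧
    {μ : ℂ | μ ≠ 0 ∧ Module.End.HasEigenvalue
        ((((2 * Complex.I)⁻¹ : ℂ) • (V ^ n - ContinuousLinearMap.adjoint (V ^ n)) : E →L[ℂ] E) : E →ₗ[ℂ] E) μ}.ncard ≤ n := by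
  have hrange : LinearMap.range
      ((((2 * Complex.I)⁻¹ : ℂ) • (V ^ n - adjoint (V ^ n)) : E →L[ℂ] E) : E →ₗ[ℂ] E)
      ≤ krylovSubspace (-V : E →ₗ[ℂ] E) constOne n := by
    rintro _ ⟨f, rfl⟩
    exact Submodule.smul_mem _ _ (hV.pow_sub_adjoint_pow_apply_mem_krylovSubspace hn f)
  rw [← Set.encard_le_coe_iff_finite_ncard_le]
  exact (encard_setOf_hasEigenvalue_ne_zero_le _ _ hrange).trans
    (by exact_mod_cast finrank_krylovSubspace_le _ _ n)

theorem im_pow_finitely_many_eigenvalues (V : E →L[ℂ] E) (hV : IsVolterra V)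
    (n : ℕ) (hn : Even n) (hn1 : 1 ≤ n) :
    {μ : ℂ | μ ≠ 0 ∧ Module.End.HasEigenvalue
        ((((2 * Complex.I)⁻¹ : ℂ) • (V ^ n - ContinuousLinearMap.adjoint (V ^ n)) : E →L[ℂ] E) : E →ₗ[ℂ] E) μ}.Finite ∧
    {μ : ℂ | μ ≠ 0 ∧ Module.End.HasEigenvalue
        ((((2 * Complex.I)⁻¹ : ℂ) • (V ^ n - ContinuousLinearMap.adjoint (V ^ n)) : E →L[ℂ] E) : E →ₗ[ℂ] E) μ}.ncard ≤ n :=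
  im_pow_finitely_many_eigenvalues_general V hV n hn
end
end

section
/- The set of eigenvalues of Im V = (V − V*)/(2i) is exactly {1/((2n+1)π) : n ∈ ℤ}. -/
/-!
Write `F f x = ∫₀ˣ f`. Fubini on the triangle `{t ≤ x}` gives `V* g = F g 1 - F g`, hence
`Im V f = (2 F f - F f 1) / (2i)`. For an eigenvector `f` with eigenvalue `μ` this says
`2 i μ f = 2 F - F 1` almost everywhere. If `μ = 0`, the continuous function `F` is constant, so
`F ≡ F 0 = 0` and `f = 0` by Lebesgue differentiation. Otherwise `u = F - F 1 / 2` solves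
`u' = c u` with `c = (i μ)⁻¹`, so `u = u 0 · exp (c x)`; evaluating at `x = 1` and excluding
`F 1 = 0` the same way gives `exp c = -1`. Conversely `exp (c x)` is an eigenvector when
`exp c = -1`, and `exp c = -1` means `c = (2m + 1) π i`, i.e. `μ = 1 / ((2n + 1) π)`.
-/

open MeasureTheory Complex ContinuousLinearMap

noncomputable section

open Set Filter Topology ComplexConjugate

theorem integral_mul_integral_swap {𝕜 : Type*} [RCLike 𝕜] {a b : ℝ} (hab : a ≤ b) {f g : ℝ → 𝕜}
    (hf : IntegrableOn f (Ioc a b)) (hg : IntegrableOn g (Ioc a b)) :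
    ∫ x in a..b, g x * ∫ t in a..x, f t = ∫ t in a..b, (∫ x in t..b, g x) * f t := by
  set S : Set (ℝ × ℝ) := {p | p.2 ≤ p.1}
  have hS : MeasurableSet S := measurableSet_le measurable_snd measurable_fst
  have hint : Integrable (S.indicator fun p => g p.1 * f p.2)
      ((volume.restrict (Ioc a b)).prod (volume.restrict (Ioc a b))) :=
    (hg.mul_prod hf).indicator hS
  have inner_left : ∀ x ∈ Ioc a b,
      ∫ t in Ioc a b, S.indicator (fun p => g p.1 * f p.2) (x, t) = g x * ∫ t in a..x, f t := by
    intro x hx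
    have : (fun t => S.indicator (fun p => g p.1 * f p.2) (x, t)) =
        (Iic x).indicator fun t => g x * f t := by
      ext t; by_cases h : t ≤ x <;> simp [S, indicator, h]
    rw [this, setIntegral_indicator measurableSet_Iic, Ioc_inter_Iic, min_eq_right hx.2,
      integral_const_mul, intervalIntegral.integral_of_le hx.1.le]
  have inner_right : ∀ t ∈ Ioc a b,
      ∫ x in Ioc a b, S.indicator (fun p => g p.1 * f p.2) (x, t) = (∫ x in t..b, g x) * f t := by
    intro t ht
    have : (fun x => S.indicator (fun p => g p.1 * f p.2) (x, t)) =
        (Ici t).indicator fun x => g x * f t := by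
      ext x; by_cases h : t ≤ x <;> simp [S, indicator, h]
    have hIcc : Ioc a b ∩ Ici t = Icc t b := by
      ext x; simp only [mem_inter_iff, mem_Ioc, mem_Ici, mem_Icc]; grind
    rw [this, setIntegral_indicator measurableSet_Ici, hIcc, integral_mul_const,
      integral_Icc_eq_integral_Ioc, intervalIntegral.integral_of_le ht.2]
  rw [intervalIntegral.integral_of_le hab, intervalIntegral.integral_of_le hab,
    ← setIntegral_congr_fun measurableSet_Ioc inner_left,
    ← setIntegral_congr_fun measurableSet_Ioc inner_right]
  exact integral_integral_swap hint

section

variable {F : Type*} [NormedAddCommGroup F] [NormedSpace ℝ F] [CompleteSpace F]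

theorem ae_eq_zero_of_forall_intervalIntegral_eq_zero {f : ℝ → F} {a b : ℝ}
    (hf : IntegrableOn f (Icc a b)) (h : ∀ x ∈ Icc a b, ∫ t in a..x, f t = 0) :
    f =ᵐ[volume.restrict (Icc a b)] 0 := by
  rcases lt_or_ge b a with hba | hab
  · simp [Icc_eq_empty_of_lt hba, EventuallyEq]
  rw [← restrict_Ioo_eq_restrict_Icc, EventuallyEq, ae_restrict_iff' measurableSet_Ioo]
  have hfI : IntervalIntegrable f volume a b :=
    (intervalIntegrable_iff_integrableOn_Icc_of_le hab).2 hf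
  filter_upwards [hfI.ae_hasDerivAt_integral] with x hderiv hx
  rw [uIcc_of_le hab] at hderiv
  have hzero : (fun y => ∫ t in a..y, f t) =ᶠ[𝓝 x] fun _ => 0 :=
    eventually_of_mem (Ioo_mem_nhds hx.1 hx.2) fun y hy => h y (Ioo_subset_Icc_self hy)
  exact (hderiv (Ioo_subset_Icc_self hx) a (left_mem_Icc.2 hab)).unique
    ((hasDerivAt_const x 0).congr_of_eventuallyEq hzero)

theorem hasDerivWithinAt_integral_of_continuousOn {g : ℝ → F} {a b x : ℝ}
    (hg : ContinuousOn g (Icc a b)) (hx : x ∈ Ico a b) :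
    HasDerivWithinAt (fun u => ∫ t in a..u, g t) (g x) (Ici x) x := by
  have hmem : Icc a b ∈ 𝓝[>] x := Icc_mem_nhdsGT_of_mem hx
  refine intervalIntegral.integral_hasDerivWithinAt_right (t := Ioi x)
    ((hg.mono (Icc_subset_Icc_right hx.2.le)).intervalIntegrable_of_Icc hx.1) ?_
    ((hg x (Ico_subset_Icc_self hx)).mono_of_mem_nhdsWithin hmem)
  exact (hg.stronglyMeasurableAtFilter_nhdsWithin measurableSet_Icc x).filter_mono
    (nhdsWithin_le_of_mem hmem)

end

theorem eqOn_mul_exp_of_eq_add_integral {u : ℝ → ℂ} {c : ℂ} {b : ℝ}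
    (hu : ContinuousOn u (Icc 0 b)) (h : ∀ x ∈ Icc 0 b, u x = u 0 + ∫ t in 0..x, c * u t) :
    ∀ x ∈ Icc 0 b, u x = u 0 * exp (c * x) := by
  have hexp : ∀ (d : ℂ) (x : ℝ), HasDerivAt (fun y : ℝ => exp (d * y)) (exp (d * x) * d) x :=
    fun d x => (((hasDerivAt_id x).ofReal_comp).const_mul d).cexp.congr_deriv (by simp)
  have hu' : ∀ x ∈ Ico 0 b, HasDerivWithinAt u (c * u x) (Ici x) x := by
    intro x hx
    refine ((hasDerivWithinAt_integral_of_continuousOn (continuousOn_const.mul hu) hx).const_add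
      (u 0)).congr_of_eventuallyEq ?_ (h x (Ico_subset_Icc_self hx))
    filter_upwards [Icc_mem_nhdsGE_of_mem hx] with y hy using h y hy
  have hconst := constant_of_has_deriv_right_zero (f := fun x => exp (-c * x) * u x)
    ((Continuous.continuousOn (by fun_prop)).mul hu) fun x hx =>
      ((hexp (-c) x).hasDerivWithinAt.fun_mul (hu' x hx)).congr_deriv (by ring)
  intro x hx
  have hx0 : exp (-c * x) * u x = u 0 := by simpa using hconst x hx
  calc u x = exp (c * x) * (exp (-c * x) * u x) := by rw [← mul_assoc, ← exp_add]; simp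
    _ = u 0 * exp (c * x) := by rw [hx0, mul_comm]

theorem Complex.exp_eq_neg_one_iff {z : ℂ} :
    exp z = -1 ↔ ∃ n : ℤ, z = (2 * n + 1) * Real.pi * I := by
  rw [← exp_pi_mul_I, exp_eq_exp_iff_exists_int]
  refine exists_congr fun n => ?_
  constructor <;> intro h <;> linear_combination h

theorem Complex.exp_inv_I_mul_eq_neg_one_iff {μ : ℂ} :
    exp (I * μ)⁻¹ = -1 ↔ ∃ n : ℤ, μ = 1 / ((2 * n + 1) * Real.pi) := by
  have hreflect : ∀ m : ℤ, (2 * ((-m - 1 : ℤ) : ℂ) + 1) = -(2 * m + 1) :=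
    fun m => by push_cast; ring
  rw [exp_eq_neg_one_iff]
  constructor
  · rintro ⟨m, hm⟩
    refine ⟨-m - 1, ?_⟩
    rw [← inv_mul_cancel_left₀ I_ne_zero μ, ← inv_inv (I * μ), hm, hreflect]
    field_simp
    simp [I_sq]
    ring
  · rintro ⟨n, rfl⟩
    refine ⟨-n - 1, ?_⟩
    rw [hreflect]
    field_simp
    simp [I_sq]

theorem memLp_of_continuousOn_Icc {F : Type*} [NormedAddCommGroup F] {u : ℝ → F} {a b : ℝ}
    {p : ENNReal} (hu : ContinuousOn u (Icc a b)) : MemLp u p (volume.restrict (Icc a b)) := by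
  obtain ⟨C, hC⟩ := isCompact_Icc.exists_bound_of_continuousOn hu
  exact .of_bound (hu.aestronglyMeasurable measurableSet_Icc) C
    (ae_restrict_of_forall_mem measurableSet_Icc hC)

theorem intervalIntegral_congr_ae_restrict_Icc {F : Type*} [NormedAddCommGroup F]
    [NormedSpace ℝ F] {f g : ℝ → F} {a b x : ℝ} (h : f =ᵐ[volume.restrict (Icc a b)] g)
    (hx : x ∈ Icc a b) : ∫ t in a..x, f t = ∫ t in a..x, g t := by
  refine intervalIntegral.integral_congr_ae ?_
  filter_upwards [(ae_restrict_iff' measurableSet_Icc).1 h] with t ht ht'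
  rw [uIoc_of_le hx.1] at ht'
  exact ht ⟨ht'.1.le, ht'.2.trans hx.2⟩

namespace E

theorem integrableOn (f : E) : IntegrableOn f (Icc 0 1) :=
  (Lp.memLp f).integrable one_le_two

theorem continuousOn_primitive (f : E) :
    ContinuousOn (fun x => ∫ t in (0 : ℝ)..x, f t) (Icc 0 1) := by
  have h := intervalIntegral.continuousOn_primitive_interval (a := 0) (b := 1) (f := f)
    (μ := volume)
  rw [uIcc_of_le zero_le_one] at h
  exact h f.integrableOn

end E

section Volterra

variable {V : E →L[ℂ] E}

theorem IsVolterra.inner_apply (hV : IsVolterra V) (f g : E) :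
    inner ℂ g (V f) =
      ∫ t in Icc 0 1, conj ((∫ x in (0 : ℝ)..1, g x) - ∫ x in (0 : ℝ)..t, g x) * f t := by
  have hg : IntegrableOn (fun x => conj (g x)) (Ioc 0 1) :=
    (conjCLE : ℂ →L[ℝ] ℂ).integrable_comp (g.integrableOn.mono_set Ioc_subset_Icc_self)
  calc inner ℂ g (V f) = ∫ x in Icc 0 1, conj (g x) * ∫ t in (0 : ℝ)..x, f t := by
        rw [L2.inner_def]
        refine integral_congr_ae ?_
        filter_upwards [hV f] with x hx
        rw [RCLike.inner_apply, hx, mul_comm]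
    _ = ∫ x in (0 : ℝ)..1, conj (g x) * ∫ t in (0 : ℝ)..x, f t := by
        rw [integral_Icc_eq_integral_Ioc, intervalIntegral.integral_of_le zero_le_one]
    _ = ∫ t in (0 : ℝ)..1, (∫ x in t..1, conj (g x)) * f t :=
        integral_mul_integral_swap zero_le_one (f.integrableOn.mono_set Ioc_subset_Icc_self) hg
    _ = ∫ t in Icc 0 1, conj ((∫ x in (0 : ℝ)..1, g x) - ∫ x in (0 : ℝ)..t, g x) * f t := by
        rw [integral_Icc_eq_integral_Ioc, ← intervalIntegral.integral_of_le zero_le_one]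
        refine intervalIntegral.integral_congr fun t ht => ?_
        rw [uIcc_of_le zero_le_one] at ht
        have hIcc : ∀ y ∈ Icc (0 : ℝ) 1, IntervalIntegrable g volume 0 y := fun y hy =>
          (intervalIntegrable_iff_integrableOn_Icc_of_le hy.1).2
            (g.integrableOn.mono_set (Icc_subset_Icc_right hy.2))
        rw [intervalIntegral.integral_interval_sub_left (hIcc 1 (right_mem_Icc.2 zero_le_one))
          (hIcc t ht), intervalIntegral.intervalIntegral_conj]

theorem IsVolterra.adjoint_apply_ae (hV : IsVolterra V) (g : E) :
    adjoint V g =ᵐ[volume.restrict (Icc 0 1)]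
      fun x => (∫ t in (0 : ℝ)..1, g t) - ∫ t in (0 : ℝ)..x, g t := by
  have hmem : MemLp (fun x => (∫ t in (0 : ℝ)..1, g t) - ∫ t in (0 : ℝ)..x, g t) 2
      (volume.restrict (Icc 0 1)) :=
    memLp_of_continuousOn_Icc (continuousOn_const.sub g.continuousOn_primitive)
  suffices adjoint V g = hmem.toLp _ from this ▸ hmem.coeFn_toLp
  refine ext_inner_right ℂ fun f => ?_
  rw [adjoint_inner_left, hV.inner_apply, L2.inner_def]
  refine integral_congr_ae ?_
  filter_upwards [hmem.coeFn_toLp] with x hx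
  rw [RCLike.inner_apply, hx, mul_comm]

theorem IsVolterra.imPart_apply_ae (hV : IsVolterra V) (f : E) :
    (((2 * I)⁻¹ • (V - adjoint V) : E →L[ℂ] E) f : ℝ → ℂ) =ᵐ[volume.restrict (Icc 0 1)]
      fun x => (2 * I)⁻¹ * (2 * (∫ t in (0 : ℝ)..x, f t) - ∫ t in (0 : ℝ)..1, f t) := by
  filter_upwards [Lp.coeFn_smul (2 * I)⁻¹ (V f - adjoint V f), Lp.coeFn_sub (V f) (adjoint V f),
    hV f, hV.adjoint_apply_ae f] with x hsmul hsub hVx hadj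
  rw [smul_apply, sub_apply, hsmul, Pi.smul_apply, hsub, Pi.sub_apply, hVx, hadj, smul_eq_mul]
  ring

open Module.End

theorem IsVolterra.exp_eq_neg_one_of_hasEigenvector (hV : IsVolterra V) {μ : ℂ} {f : E}
    (hf : HasEigenvector (((2 * I)⁻¹ • (V - adjoint V) : E →L[ℂ] E) : E →ₗ[ℂ] E) μ f) :
    exp (I * μ)⁻¹ = -1 := by
  set F : ℝ → ℂ := fun x => ∫ t in (0 : ℝ)..x, f t
  have heq : ∀ᵐ x ∂volume.restrict (Icc 0 1), 2 * I * μ * f x = 2 * F x - F 1 := by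
    filter_upwards [hV.imPart_apply_ae f, Lp.coeFn_smul μ f] with x hx hsmul
    rw [← coe_coe, hf.apply_eq_smul, hsmul, Pi.smul_apply, smul_eq_mul,
      eq_inv_mul_iff_mul_eq₀ (mul_ne_zero two_ne_zero I_ne_zero)] at hx
    linear_combination hx
  have hF0 : ¬ ∀ x ∈ Icc 0 1, F x = 0 := fun h => hf.2 <| Lp.eq_zero_iff_ae_eq_zero.2 <|
    ae_eq_zero_of_forall_intervalIntegral_eq_zero f.integrableOn h
  have hμ : μ ≠ 0 := by
    rintro rfl
    have hconst : EqOn F (fun _ => F 1 / 2) (Icc 0 1) := by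
      refine Measure.eqOn_Icc_of_ae_eq volume zero_ne_one ?_ f.continuousOn_primitive
        continuousOn_const
      filter_upwards [heq] with x hx
      linear_combination -hx / 2
    have hC : F 1 / 2 = 0 := by
      simpa [F] using (hconst (left_mem_Icc.2 zero_le_one)).symm
    exact hF0 fun x hx => (hconst hx).trans hC
  set c := (I * μ)⁻¹
  set u : ℝ → ℂ := fun x => F x - F 1 / 2
  have hfu : (f : ℝ → ℂ) =ᵐ[volume.restrict (Icc 0 1)] fun x => c * u x := by
    filter_upwards [heq] with x hx
    rw [eq_inv_mul_iff_mul_eq₀ (mul_ne_zero I_ne_zero hμ)]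
    linear_combination hx / 2
  have hu : ∀ x ∈ Icc (0 : ℝ) 1, u x = u 0 + ∫ t in (0 : ℝ)..x, c * u t := by
    intro x hx
    simp only [u, F, intervalIntegral.integral_same]
    rw [← intervalIntegral_congr_ae_restrict_Icc hfu hx]
    ring
  have hsol := eqOn_mul_exp_of_eq_add_integral (u := u)
    (f.continuousOn_primitive.sub continuousOn_const) hu
  have hF_zero : F 0 = 0 := intervalIntegral.integral_same
  have hC : F 1 ≠ 0 := fun hC => hF0 fun x hx => by simpa [u, hF_zero, hC] using hsol x hx
  have h1 : F 1 / 2 * (exp c + 1) = 0 := by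
    have := hsol 1 (right_mem_Icc.2 zero_le_one)
    simp only [u, hF_zero, ofReal_one, mul_one] at this
    linear_combination this
  simpa [hC, add_eq_zero_iff_eq_neg] using h1

theorem IsVolterra.hasEigenvalue_of_exp_eq_neg_one (hV : IsVolterra V) {μ : ℂ}
    (h : exp (I * μ)⁻¹ = -1) :
    HasEigenvalue (((2 * I)⁻¹ • (V - adjoint V) : E →L[ℂ] E) : E →ₗ[ℂ] E) μ := by
  set c := (I * μ)⁻¹
  have hc : c ≠ 0 := fun hc => by norm_num [hc] at h
  have hμ : μ ≠ 0 := fun hμ => hc (by simp [c, hμ])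
  have hmem : MemLp (fun x : ℝ => exp (c * x)) 2 (volume.restrict (Icc 0 1)) :=
    memLp_of_continuousOn_Icc (by fun_prop)
  set f : E := hmem.toLp _
  have hf0 : f ≠ 0 := fun hf => by
    simpa using Measure.eqOn_Icc_of_ae_eq volume zero_ne_one
      (hmem.coeFn_toLp.symm.trans (Lp.eq_zero_iff_ae_eq_zero.1 hf)) (by fun_prop)
      continuousOn_const (left_mem_Icc.2 zero_le_one)
  have hprim : ∀ x ∈ Icc (0 : ℝ) 1, ∫ t in (0 : ℝ)..x, f t = (exp (c * x) - 1) / c :=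
    fun x hx => by
      rw [intervalIntegral_congr_ae_restrict_Icc hmem.coeFn_toLp hx, integral_exp_mul_complex hc]
      simp
  refine hasEigenvalue_of_hasEigenvector ⟨mem_eigenspace_iff.2 (Lp.ext ?_), hf0⟩
  filter_upwards [hV.imPart_apply_ae f, Lp.coeFn_smul μ f, hmem.coeFn_toLp,
    ae_restrict_mem measurableSet_Icc] with x hx hsmul hfx hxI
  rw [coe_coe, hx, hsmul, Pi.smul_apply, hfx, hprim x hxI, hprim 1 (right_mem_Icc.2 zero_le_one),
    ofReal_one, mul_one, h, smul_eq_mul]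
  simp only [c]
  field_simp
  ring

theorem IsVolterra.hasEigenvalue_imPart_iff (hV : IsVolterra V) (μ : ℂ) :
    HasEigenvalue (((2 * I)⁻¹ • (V - adjoint V) : E →L[ℂ] E) : E →ₗ[ℂ] E) μ ↔
      exp (I * μ)⁻¹ = -1 :=
  ⟨fun h => hV.exp_eq_neg_one_of_hasEigenvector h.exists_hasEigenvector.choose_spec,
    hV.hasEigenvalue_of_exp_eq_neg_one⟩

end Volterra

theorem im_volterra_eigenvalues (V : E →L[ℂ] E) (hV : IsVolterra V) :
    {μ : ℂ | Module.End.HasEigenvalue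
        ((((2 * Complex.I)⁻¹ : ℂ) • (V - ContinuousLinearMap.adjoint V) : E →L[ℂ] E) : E →ₗ[ℂ] E) μ} =
      {μ : ℂ | ∃ n : ℤ, μ = 1 / ((2 * (n : ℂ) + 1) * (Real.pi : ℂ))} :=
  Set.ext fun μ => (hV.hasEigenvalue_imPart_iff μ).trans exp_inv_I_mul_eq_neg_one_iff
end
end

section
/- The non-zero eigenvalues of Re V³ = (V³ + V*³)/2 are exactly −1/24, 1/48 + √5/80, and 1/48 − √5/80. -/
open MeasureTheory Complex ContinuousLinearMap

noncomputable section

/-!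
Fubini on the triangle `0 ≤ t ≤ x ≤ 1` (integration by parts for primitives of `L¹` functions)
gives `V + V* = ⟪1, ·⟫ 1`. Substituting `V* = ⟪1, ·⟫ 1 - V` into `V*³` and using
`V xᵏ = xᵏ⁺¹ / (k + 1)`, the term `V³` cancels and `Re V³` becomes the rank-three operator with
kernel `(x - s)² / 4 = Σ K i j xⁱ sʲ`. Since `AB` and `BA` have the same nonzero eigenvalues,
those of this operator are the eigenvalues of `K G`, where `G` is the Gram (Hilbert) matrix of
`1, x, x²`, and `det (μ - K G) = μ³ - μ / 480 - 1 / 69120`.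
-/

open Set ComplexConjugate Module.End
open scoped InnerProductSpace

theorem Module.End.HasEigenvalue.comp_comm {K M N : Type*} [Field K] [AddCommGroup M]
    [Module K M] [AddCommGroup N] [Module K N] {A : M →ₗ[K] N} {B : N →ₗ[K] M} {μ : K}
    (hμ : μ ≠ 0) (h : HasEigenvalue (B ∘ₗ A) μ) : HasEigenvalue (A ∘ₗ B) μ := by
  obtain ⟨v, hv, hv0⟩ := h.exists_hasEigenvector
  have hBAv : B (A v) = μ • v := mem_eigenspace_iff.1 hv
  have hAv : A v ≠ 0 := by
    intro h0
    rw [h0, map_zero, eq_comm, smul_eq_zero] at hBAv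
    exact hv0 (hBAv.resolve_left hμ)
  refine hasEigenvalue_of_hasEigenvector ⟨mem_eigenspace_iff.2 ?_, hAv⟩
  simp [hBAv]

theorem Module.End.hasEigenvalue_comp_comm {K M N : Type*} [Field K] [AddCommGroup M]
    [Module K M] [AddCommGroup N] [Module K N] (A : M →ₗ[K] N) (B : N →ₗ[K] M) {μ : K}
    (hμ : μ ≠ 0) : HasEigenvalue (A ∘ₗ B) μ ↔ HasEigenvalue (B ∘ₗ A) μ :=
  ⟨HasEigenvalue.comp_comm hμ, HasEigenvalue.comp_comm hμ⟩

section FiniteRank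

variable {𝕜 F ι : Type*} [RCLike 𝕜] [NormedAddCommGroup F] [InnerProductSpace 𝕜 F]
  [Fintype ι] [DecidableEq ι]

theorem pi_innerₛₗ_comp_linearCombination (q : ι → F) :
    LinearMap.pi (fun i => innerₛₗ 𝕜 (q i)) ∘ₗ Fintype.linearCombination 𝕜 q =
      Matrix.toLin' (Matrix.gram 𝕜 q) := by
  refine LinearMap.ext fun c => funext fun i => ?_
  simp [Fintype.linearCombination_apply, Matrix.mulVec, dotProduct, Matrix.gram, mul_comm]

theorem hasEigenvalue_linearCombination_comp_iff_isRoot_charpoly (q : ι → F)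
    (K : Matrix ι ι 𝕜) {μ : 𝕜} (hμ : μ ≠ 0) :
    HasEigenvalue (Fintype.linearCombination 𝕜 q ∘ₗ Matrix.toLin' K ∘ₗ
        LinearMap.pi (fun i => innerₛₗ 𝕜 (q i))) μ ↔
      (K * Matrix.gram 𝕜 q).charpoly.IsRoot μ := by
  rw [hasEigenvalue_comp_comm _ _ hμ, LinearMap.comp_assoc, pi_innerₛₗ_comp_linearCombination,
    ← Matrix.toLin'_mul, hasEigenvalue_iff_isRoot_charpoly, Matrix.charpoly_toLin']

end FiniteRank

theorem intervalIntegral_integral_swap_triangle {G : Type*} [NormedAddCommGroup G]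
    [NormedSpace ℝ G] {a b : ℝ} (hab : a ≤ b) {F : ℝ → ℝ → G}
    (hF : Integrable (Function.uncurry F)
      ((volume.restrict (Ioc a b)).prod (volume.restrict (Ioc a b)))) :
    ∫ x in a..b, ∫ t in a..x, F x t = ∫ t in a..b, ∫ x in t..b, F x t := by
  set H : ℝ × ℝ → G := {p | p.2 ≤ p.1}.indicator (Function.uncurry F)
  have hH : Integrable H ((volume.restrict (Ioc a b)).prod (volume.restrict (Ioc a b))) :=
    hF.indicator (measurableSet_le measurable_snd measurable_fst)
  have hleft : ∀ x ∈ Ioc a b, ∫ t in a..x, F x t = ∫ t in Ioc a b, H (x, t) := by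
    intro x hx
    have hsection : (fun t => H (x, t)) = (Iic x).indicator (F x) := by
      ext t; simp [H, indicator]
    rw [hsection, setIntegral_indicator measurableSet_Iic, Ioc_inter_Iic, min_eq_right hx.2,
      intervalIntegral.integral_of_le hx.1.le]
  have hright : ∀ t ∈ Ioc a b, ∫ x in t..b, F x t = ∫ x in Ioc a b, H (x, t) := by
    intro t ht
    have hsection : (fun x => H (x, t)) = (Ici t).indicator (fun x => F x t) := by
      ext x; simp [H, indicator]
    have hset : Ioc a b ∩ Ici t = Icc t b := by
      ext x
      simp only [mem_inter_iff, mem_Ioc, mem_Ici, mem_Icc]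
      constructor
      · rintro ⟨⟨-, hxb⟩, htx⟩; exact ⟨htx, hxb⟩
      · rintro ⟨htx, hxb⟩; exact ⟨⟨ht.1.trans_le htx, hxb⟩, htx⟩
    rw [hsection, setIntegral_indicator measurableSet_Ici, hset, integral_Icc_eq_integral_Ioc,
      intervalIntegral.integral_of_le ht.2]
  calc ∫ x in a..b, ∫ t in a..x, F x t
      = ∫ x in Ioc a b, ∫ t in Ioc a b, H (x, t) := by
        rw [intervalIntegral.integral_of_le hab]
        exact setIntegral_congr_fun measurableSet_Ioc hleft
    _ = ∫ t in Ioc a b, ∫ x in Ioc a b, H (x, t) := integral_integral_swap hH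
    _ = ∫ t in a..b, ∫ x in t..b, F x t := by
        rw [intervalIntegral.integral_of_le hab]
        exact (setIntegral_congr_fun measurableSet_Ioc hright).symm

theorem intervalIntegral_primitive_mul_add_mul_primitive {𝕜 : Type*} [RCLike 𝕜] {a b : ℝ}
    (hab : a ≤ b) {φ ψ : ℝ → 𝕜} (hφ : IntegrableOn φ (Icc a b)) (hψ : IntegrableOn ψ (Icc a b)) :
    (∫ x in a..b, (∫ t in a..x, φ t) * ψ x) + ∫ x in a..b, φ x * ∫ t in a..x, ψ t =
      (∫ x in a..b, φ x) * ∫ x in a..b, ψ x := by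
  rw [← uIcc_of_le hab] at hφ hψ
  have hswap : ∫ x in a..b, (∫ t in a..x, φ t) * ψ x = ∫ t in a..b, φ t * ∫ x in t..b, ψ x := by
    have hF : Integrable (Function.uncurry fun x t => φ t * ψ x)
        ((volume.restrict (Ioc a b)).prod (volume.restrict (Ioc a b))) := by
      have hφ' := hφ.intervalIntegrable.def'
      have hψ' := hψ.intervalIntegrable.def'
      rw [uIoc_of_le hab] at hφ' hψ'
      simpa only [Function.uncurry_def, mul_comm] using hψ'.mul_prod hφ'
    simpa only [intervalIntegral.integral_mul_const, intervalIntegral.integral_const_mul]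
      using intervalIntegral_integral_swap_triangle hab hF
  have hsplit : ∀ x ∈ uIcc a b, (∫ t in x..b, ψ t) + ∫ t in a..x, ψ t = ∫ t in a..b, ψ t := by
    intro x hx
    rw [add_comm, intervalIntegral.integral_add_adjacent_intervals]
    · exact (hψ.mono_set (uIcc_subset_uIcc_left hx)).intervalIntegrable
    · exact (hψ.mono_set (uIcc_subset_uIcc_right hx)).intervalIntegrable
  rw [hswap, ← intervalIntegral.integral_add
      (hφ.intervalIntegrable.mul_continuousOn
        (intervalIntegral.continuousOn_primitive_interval_left hψ))
      (hφ.intervalIntegrable.mul_continuousOn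
        (intervalIntegral.continuousOn_primitive_interval hψ)),
    ← intervalIntegral.integral_mul_const]
  refine intervalIntegral.integral_congr fun x hx => ?_
  simp only [← mul_add, hsplit x hx]

theorem memLp_ofReal_pow (k : ℕ) :
    MemLp (fun x : ℝ => ((x ^ k : ℝ) : ℂ)) 2 (volume.restrict (Icc (0:ℝ) 1)) := by
  refine MemLp.of_bound (by fun_prop) 1 ?_
  filter_upwards [ae_restrict_mem measurableSet_Icc] with x hx
  rw [Complex.norm_real, Real.norm_eq_abs, abs_of_nonneg (pow_nonneg hx.1 k)]
  exact pow_le_one₀ hx.1 hx.2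

def monomial (k : ℕ) : E := (memLp_ofReal_pow k).toLp _

theorem coeFn_monomial (k : ℕ) :
    (monomial k : ℝ → ℂ) =ᵐ[volume.restrict (Icc (0:ℝ) 1)] fun x => ((x ^ k : ℝ) : ℂ) :=
  MemLp.coeFn_toLp _

theorem integrableOn_Icc_coeFn (f : E) : IntegrableOn (f : ℝ → ℂ) (Icc 0 1) :=
  (Lp.memLp f).integrable one_le_two

theorem inner_eq_intervalIntegral_s8 {f g : E} {f' g' : ℝ → ℂ}
    (hf : (f : ℝ → ℂ) =ᵐ[volume.restrict (Icc (0:ℝ) 1)] f')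
    (hg : (g : ℝ → ℂ) =ᵐ[volume.restrict (Icc (0:ℝ) 1)] g') :
    ⟪f, g⟫_ℂ = ∫ x in 0..1, conj (f' x) * g' x := by
  rw [L2.inner_def, intervalIntegral.integral_of_le zero_le_one, ← integral_Icc_eq_integral_Ioc]
  refine integral_congr_ae ?_
  filter_upwards [hf, hg] with x hfx hgx
  rw [hfx, hgx, RCLike.inner_apply, mul_comm]

theorem inner_monomial (j k : ℕ) : ⟪monomial j, monomial k⟫_ℂ = 1 / (j + k + 1) := by
  rw [inner_eq_intervalIntegral_s8 (coeFn_monomial j) (coeFn_monomial k)]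
  simp_rw [conj_ofReal, ← ofReal_mul, ← pow_add, intervalIntegral.integral_ofReal, integral_pow]
  push_cast
  ring

theorem intervalIntegral_congr_of_ae_eq_Icc {f g : ℝ → ℂ} {x : ℝ}
    (h : f =ᵐ[volume.restrict (Icc (0:ℝ) 1)] g) (hx : x ∈ Icc (0:ℝ) 1) :
    ∫ t in 0..x, f t = ∫ t in 0..x, g t := by
  rw [intervalIntegral.integral_of_le hx.1, intervalIntegral.integral_of_le hx.1]
  exact integral_congr_ae (ae_restrict_of_ae_restrict_of_subset
    (Ioc_subset_Icc_self.trans (Icc_subset_Icc_right hx.2)) h)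

/-- Coefficients of the kernel `(x - s)² / 4` of `Re V³` in the monomials `xⁱ sʲ`. -/
def reVolterraCubeKernel : Matrix (Fin 3) (Fin 3) ℂ := !![0, 0, 1/4; 0, -1/2, 0; 1/4, 0, 0]

theorem gram_monomial_fin_three :
    Matrix.gram ℂ (fun i : Fin 3 => monomial i) =
      !![1, 1/2, 1/3; 1/2, 1/3, 1/4; 1/3, 1/4, 1/5] := by
  ext i j
  fin_cases i <;> fin_cases j <;> norm_num [Matrix.gram, inner_monomial]

theorem eval_charpoly_reVolterraCubeKernel_mul_gram (μ : ℂ) :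
    (reVolterraCubeKernel * Matrix.gram ℂ (fun i : Fin 3 => monomial i)).charpoly.eval μ =
      μ ^ 3 - μ / 480 - 1 / 69120 := by
  rw [gram_monomial_fin_three, Matrix.eval_charpoly, Matrix.det_fin_three]
  simp [reVolterraCubeKernel]
  ring

namespace IsVolterra

variable {V : E →L[ℂ] E}

theorem apply_monomial (hV : IsVolterra V) (k : ℕ) :
    V (monomial k) = ((k : ℂ) + 1)⁻¹ • monomial (k + 1) := by
  refine Lp.ext ?_
  filter_upwards [hV (monomial k), Lp.coeFn_smul ((k : ℂ) + 1)⁻¹ (monomial (k + 1)),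
    coeFn_monomial (k + 1), ae_restrict_mem measurableSet_Icc] with x hVx hsmul hxk hx
  rw [hVx, hsmul, Pi.smul_apply, hxk, intervalIntegral_congr_of_ae_eq_Icc (coeFn_monomial k) hx,
    intervalIntegral.integral_ofReal, integral_pow, smul_eq_mul]
  push_cast
  ring

theorem adjoint_apply (hV : IsVolterra V) (f : E) :
    adjoint V f = ⟪monomial 0, f⟫_ℂ • monomial 0 - V f := by
  refine ext_inner_left ℂ fun g => ?_
  rw [adjoint_inner_right, inner_sub_right, inner_smul_right, eq_sub_iff_add_eq,
    inner_eq_intervalIntegral_s8 (hV g) (ae_eq_refl _),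
    inner_eq_intervalIntegral_s8 (ae_eq_refl _) (hV f),
    inner_eq_intervalIntegral_s8 (coeFn_monomial 0) (ae_eq_refl _),
    inner_eq_intervalIntegral_s8 (ae_eq_refl _) (coeFn_monomial 0)]
  have hconj : ∀ x, conj (∫ t in 0..x, (g : ℝ → ℂ) t) = ∫ t in 0..x, conj ((g : ℝ → ℂ) t) :=
    fun x => (conjLIE.toLinearIsometry.intervalIntegral_comp_comm _).symm
  simp only [hconj, ofReal_one, pow_zero, map_one, one_mul, mul_one]
  rw [intervalIntegral_primitive_mul_add_mul_primitive zero_le_one _ (integrableOn_Icc_coeFn f),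
    mul_comm]
  exact conjCLE.toContinuousLinearMap.integrable_comp (integrableOn_Icc_coeFn g)

theorem cube_add_adjoint_cube_apply (hV : IsVolterra V) (f : E) :
    (V ^ 3 + adjoint (V ^ 3) : E →L[ℂ] E) f = (2⁻¹ * ⟪monomial 2, f⟫_ℂ) • monomial 0
      - ⟪monomial 1, f⟫_ℂ • monomial 1 + (2⁻¹ * ⟪monomial 0, f⟫_ℂ) • monomial 2 := by
  have hV0 : V (monomial 0) = monomial 1 := by simpa using hV.apply_monomial 0
  have hV1 : V (monomial 1) = (2 : ℂ)⁻¹ • monomial 2 := by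
    simpa [one_add_one_eq_two] using hV.apply_monomial 1
  have hW := hV.adjoint_apply
  have hW2 : adjoint V (adjoint V f) =
      ⟪monomial 1, f⟫_ℂ • monomial 0 - ⟪monomial 0, f⟫_ℂ • monomial 1 + V (V f) := by
    rw [hW (adjoint V f), adjoint_inner_right, hV0, hW f, map_sub, map_smul, hV0]
    module
  have hW3 : adjoint V (adjoint V (adjoint V f)) = (2⁻¹ * ⟪monomial 2, f⟫_ℂ) • monomial 0
      - ⟪monomial 1, f⟫_ℂ • monomial 1 + (2⁻¹ * ⟪monomial 0, f⟫_ℂ) • monomial 2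
      - V (V (V f)) := by
    rw [hW (adjoint V (adjoint V f)), adjoint_inner_right, hV0, adjoint_inner_right, hV1,
      inner_smul_left, hW2, map_add, map_sub, map_smul, map_smul, hV0, hV1]
    simp only [map_inv₀, map_ofNat]
    module
  rw [← star_eq_adjoint, star_pow, star_eq_adjoint]
  simp only [add_apply, pow_succ, pow_zero, one_mul, mul_def, comp_apply]
  rw [hW3]
  abel

theorem reCube_eq (hV : IsVolterra V) :
    (((2:ℂ)⁻¹ • (V ^ 3 + adjoint (V ^ 3)) : E →L[ℂ] E) : E →ₗ[ℂ] E) =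
      Fintype.linearCombination ℂ (fun i : Fin 3 => monomial i) ∘ₗ
        Matrix.toLin' reVolterraCubeKernel ∘ₗ
          LinearMap.pi (fun i : Fin 3 => innerₛₗ ℂ (monomial i)) := by
  refine LinearMap.ext fun f => ?_
  rw [coe_coe, smul_apply, hV.cube_add_adjoint_cube_apply]
  simp [Fintype.linearCombination_apply, Fin.sum_univ_three, dotProduct, reVolterraCubeKernel]
  module

theorem hasEigenvalue_reCube_iff (hV : IsVolterra V) {μ : ℂ} (hμ : μ ≠ 0) :
    HasEigenvalue (((2:ℂ)⁻¹ • (V ^ 3 + adjoint (V ^ 3)) : E →L[ℂ] E) : E →ₗ[ℂ] E) μ ↔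
      μ ^ 3 - μ / 480 - 1 / 69120 = 0 := by
  rw [hV.reCube_eq, hasEigenvalue_linearCombination_comp_iff_isRoot_charpoly _ _ hμ,
    Polynomial.IsRoot.def, eval_charpoly_reVolterraCubeKernel_mul_gram]

end IsVolterra

theorem cubic_eq_zero_iff (μ : ℂ) :
    μ ^ 3 - μ / 480 - 1 / 69120 = 0 ↔ μ = ((-1/24 : ℝ) : ℂ) ∨
      μ = ((1/48 + Real.sqrt 5 / 80 : ℝ) : ℂ) ∨ μ = ((1/48 - Real.sqrt 5 / 80 : ℝ) : ℂ) := by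
  have h5 : ((Real.sqrt 5 : ℝ) : ℂ) ^ 2 = 5 := by
    rw [← ofReal_pow, Real.sq_sqrt (by norm_num : (0:ℝ) ≤ 5)]
    norm_num
  have hfactor : μ ^ 3 - μ / 480 - 1 / 69120 = (μ - ((-1/24 : ℝ) : ℂ)) *
      (μ - ((1/48 + Real.sqrt 5 / 80 : ℝ) : ℂ)) * (μ - ((1/48 - Real.sqrt 5 / 80 : ℝ) : ℂ)) := by
    push_cast
    linear_combination ((μ + 1/24) / 6400) * h5
  rw [hfactor, mul_eq_zero, mul_eq_zero, sub_eq_zero, sub_eq_zero, sub_eq_zero, or_assoc]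

theorem re_volterra_cube_eigenvalues (V : E →L[ℂ] E) (hV : IsVolterra V) :
    {μ : ℂ | μ ≠ 0 ∧ Module.End.HasEigenvalue
        (((2:ℂ)⁻¹ • (V ^ 3 + ContinuousLinearMap.adjoint (V ^ 3)) : E →L[ℂ] E) : E →ₗ[ℂ] E) μ} =
      {((-1/24 : ℝ) : ℂ), ((1/48 + Real.sqrt 5 / 80 : ℝ) : ℂ), ((1/48 - Real.sqrt 5 / 80 : ℝ) : ℂ)} := by
  ext μ
  simp only [mem_ofPred_eq, mem_insert_iff, mem_singleton_iff, ← cubic_eq_zero_iff]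
  constructor
  · rintro ⟨hμ, h⟩
    exact (hV.hasEigenvalue_reCube_iff hμ).1 h
  · intro h
    have hμ : μ ≠ 0 := by
      rintro rfl
      norm_num at h
    exact ⟨hμ, (hV.hasEigenvalue_reCube_iff hμ).2 h⟩
end
end

section
/- For every n ≥ 1 and f(x) = 1 − 2x, the quadratic form of Re Vⁿ satisfies ⟨(Re Vⁿ)f, f⟩ = −(n−1)/((n+3)·(n+1)!); in particular, for n ≥ 2 the numerical range of Vⁿ contains points with strictly negative real part, so Vⁿ is neither accretive nor dissipative. -/
open MeasureTheory Complex ContinuousLinearMap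

noncomputable section

/-!
`V ^ n` maps a function to its `n`-fold primitive vanishing at `0`, so `V ^ n (1 - 2x)` is the
polynomial `x ^ n / n! - 2 x ^ (n + 1) / (n + 1)!` and `⟪V ^ n f, f⟫` is an elementary real
integral, equal to `-(n - 1) / ((n + 3) (n + 1)!)`. Being real, it is also the value of the
quadratic form of `Re V ^ n = (V ^ n + (V ^ n)†) / 2`. It is negative for `n ≥ 2`, while
`⟪V ^ n 1, 1⟫ = 1 / (n + 1)!` is positive.
-/

open scoped Nat

local notation "μ" => volume.restrict (Set.Icc (0:ℝ) 1)

theorem inner_half_add_adjoint_apply_self {H : Type*} [NormedAddCommGroup H]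
    [InnerProductSpace ℂ H] [CompleteSpace H] (T : H →L[ℂ] H) (f : H) :
    inner ℂ (((2:ℂ)⁻¹ • (T + adjoint T)) f) f = ((inner ℂ (T f) f).re : ℂ) := by
  rw [smul_apply, add_apply, inner_smul_left, inner_add_left, adjoint_inner_left,
    ← inner_conj_symm f (T f), add_conj, map_inv₀, conj_ofNat]
  push_cast
  ring

theorem inner_eq_integral_mul_of_ae_eq_ofReal {g h : E} {a b : ℝ → ℝ}
    (hg : g =ᵐ[μ] fun x => (a x : ℂ)) (hh : h =ᵐ[μ] fun x => (b x : ℂ)) :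
    inner ℂ g h = ((∫ x in (0:ℝ)..1, a x * b x : ℝ) : ℂ) := by
  rw [L2.inner_def, intervalIntegral.integral_of_le zero_le_one,
    ← integral_Icc_eq_integral_Ioc, ← integral_complex_ofReal]
  refine integral_congr_ae ?_
  filter_upwards [hg, hh] with x hgx hhx
  rw [hgx, hhx, RCLike.inner_apply, conj_ofReal, ofReal_mul, mul_comm]

def powDivFactorial (k : ℕ) (x : ℝ) : ℝ := x ^ k / k !

theorem continuous_powDivFactorial (k : ℕ) : Continuous (powDivFactorial k) := by
  unfold powDivFactorial; fun_prop

theorem powDivFactorial_zero (x : ℝ) : powDivFactorial 0 x = 1 := by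
  simp [powDivFactorial]

theorem integral_powDivFactorial (k : ℕ) (x : ℝ) :
    ∫ t in (0:ℝ)..x, powDivFactorial k t = powDivFactorial (k + 1) x := by
  simp only [powDivFactorial, intervalIntegral.integral_div, integral_pow, Nat.factorial_succ]
  push_cast
  field_simp
  ring

theorem integral_powDivFactorial_zero_one (k : ℕ) :
    ∫ t in (0:ℝ)..1, powDivFactorial k t = 1 / (k + 1)! := by
  rw [integral_powDivFactorial, powDivFactorial, one_pow]

theorem mul_powDivFactorial (k : ℕ) (x : ℝ) :
    x * powDivFactorial k x = (k + 1) * powDivFactorial (k + 1) x := by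
  simp only [powDivFactorial, Nat.factorial_succ]
  push_cast
  field_simp
  ring

/-- The `k`-th primitive of `1 - 2x` vanishing at `0`. -/
def iteratedPrimitive (k : ℕ) (x : ℝ) : ℝ :=
  powDivFactorial k x - 2 * powDivFactorial (k + 1) x

theorem integral_iteratedPrimitive (k : ℕ) (x : ℝ) :
    ∫ t in (0:ℝ)..x, iteratedPrimitive k t = iteratedPrimitive (k + 1) x := by
  have hint (j : ℕ) : IntervalIntegrable (powDivFactorial j) volume 0 x :=
    (continuous_powDivFactorial j).intervalIntegrable 0 x
  unfold iteratedPrimitive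
  rw [intervalIntegral.integral_sub (hint k) ((hint (k + 1)).const_mul 2),
    intervalIntegral.integral_const_mul, integral_powDivFactorial, integral_powDivFactorial]

theorem iteratedPrimitive_zero (x : ℝ) : iteratedPrimitive 0 x = 1 - 2 * x := by
  simp [iteratedPrimitive, powDivFactorial]

theorem integral_iteratedPrimitive_mul_iteratedPrimitive_zero (n : ℕ) :
    ∫ x in (0:ℝ)..1, iteratedPrimitive n x * iteratedPrimitive 0 x =
      -((n - 1) / ((n + 3) * (n + 1)!)) := by
  have hint (j : ℕ) : IntervalIntegrable (powDivFactorial j) volume 0 1 :=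
    (continuous_powDivFactorial j).intervalIntegrable 0 1
  have hexpand (x : ℝ) : iteratedPrimitive n x * iteratedPrimitive 0 x =
      powDivFactorial n x - 2 * (n + 2) * powDivFactorial (n + 1) x +
        4 * (n + 2) * powDivFactorial (n + 2) x := by
    have h := mul_powDivFactorial (n + 1) x
    push_cast at h
    rw [iteratedPrimitive_zero, iteratedPrimitive]
    linear_combination (-2) * mul_powDivFactorial n x + 4 * h
  simp_rw [hexpand]
  rw [intervalIntegral.integral_add ((hint n).sub ((hint (n + 1)).const_mul _))
      ((hint (n + 2)).const_mul _),
    intervalIntegral.integral_sub (hint n) ((hint (n + 1)).const_mul _),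
    intervalIntegral.integral_const_mul, intervalIntegral.integral_const_mul,
    integral_powDivFactorial_zero_one, integral_powDivFactorial_zero_one,
    integral_powDivFactorial_zero_one]
  simp only [Nat.factorial_succ]
  push_cast
  field_simp
  ring

namespace IsVolterra

variable {V : E →L[ℂ] E}

theorem apply_ae_eq_integral (hV : IsVolterra V) {g : E} {q : ℝ → ℝ}
    (hg : g =ᵐ[μ] fun x => (q x : ℂ)) :
    V g =ᵐ[μ] fun x => ((∫ t in (0:ℝ)..x, q t : ℝ) : ℂ) := by
  have hg' : ∀ᵐ t, t ∈ Set.Icc (0:ℝ) 1 → g t = q t :=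
    (ae_restrict_iff' measurableSet_Icc).mp hg
  filter_upwards [hV g, ae_restrict_mem measurableSet_Icc] with x hVx hx
  rw [hVx, ← intervalIntegral.integral_ofReal]
  refine intervalIntegral.integral_congr_ae ?_
  filter_upwards [hg'] with t ht htx
  rw [Set.uIoc_of_le hx.1] at htx
  exact ht ⟨htx.1.le, htx.2.trans hx.2⟩

theorem pow_apply_ae_eq (hV : IsVolterra V) {q : ℕ → ℝ → ℝ}
    (hq : ∀ k x, ∫ t in (0:ℝ)..x, q k t = q (k + 1) x) {g : E}
    (hg : g =ᵐ[μ] fun x => (q 0 x : ℂ)) (k : ℕ) :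
    (V ^ k) g =ᵐ[μ] fun x => (q k x : ℂ) := by
  induction k with
  | zero => exact hg
  | succ k ih =>
    rw [pow_succ', mul_apply_eq_comp]
    simpa only [hq] using hV.apply_ae_eq_integral ih

theorem inner_pow_apply_of_ae_eq_one (hV : IsVolterra V) {g : E} (hg : g =ᵐ[μ] fun _ => 1)
    (n : ℕ) : inner ℂ ((V ^ n) g) g = ((1 / (n + 1)! : ℝ) : ℂ) := by
  have hg' : g =ᵐ[μ] fun x => (powDivFactorial 0 x : ℂ) := by
    simpa only [powDivFactorial_zero, ofReal_one] using hg
  rw [inner_eq_integral_mul_of_ae_eq_ofReal (hV.pow_apply_ae_eq integral_powDivFactorial hg' n) hg']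
  simp only [powDivFactorial_zero, mul_one, integral_powDivFactorial_zero_one]

theorem inner_pow_apply_of_ae_eq_one_sub_two_mul (hV : IsVolterra V) {f : E}
    (hf : f =ᵐ[μ] fun x => 1 - 2 * (x : ℂ)) (n : ℕ) :
    inner ℂ ((V ^ n) f) f = ((-((n - 1) / ((n + 3) * (n + 1)!)) : ℝ) : ℂ) := by
  have hf' : f =ᵐ[μ] fun x => (iteratedPrimitive 0 x : ℂ) := by
    simpa [iteratedPrimitive_zero] using hf
  rw [inner_eq_integral_mul_of_ae_eq_ofReal
    (hV.pow_apply_ae_eq integral_iteratedPrimitive hf' n) hf',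
    integral_iteratedPrimitive_mul_iteratedPrimitive_zero]

end IsVolterra

theorem re_pow_quadratic_form_general (V : E →L[ℂ] E) (hV : IsVolterra V) (n : ℕ)
    (f : E) (hf : (f : ℝ → ℂ) =ᵐ[volume.restrict (Set.Icc (0:ℝ) 1)] fun x => 1 - 2 * (x : ℂ)) :
    (inner ℂ (((2:ℂ)⁻¹ • (V ^ n + ContinuousLinearMap.adjoint (V ^ n))) f) f : ℂ) =
      -(((n : ℂ) - 1) / (((n : ℂ) + 3) * (Nat.factorial (n + 1)))) ∧
    (2 ≤ n →
      (∃ g : E, (inner ℂ ((V ^ n) g) g : ℂ).re < 0) ∧ (∃ g : E, 0 < (inner ℂ ((V ^ n) g) g : ℂ).re)) := by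
  have hVf := hV.inner_pow_apply_of_ae_eq_one_sub_two_mul hf n
  refine ⟨?_, fun hn => ⟨⟨f, ?_⟩, ⟨Lp.const 2 μ 1, ?_⟩⟩⟩
  · rw [inner_half_add_adjoint_apply_self, hVf, ofReal_re]
    push_cast
    ring
  · have hn' : (2:ℝ) ≤ n := by exact_mod_cast hn
    rw [hVf, ofReal_re, neg_neg_iff_pos]
    exact div_pos (by linarith) (by positivity)
  · rw [hV.inner_pow_apply_of_ae_eq_one (Lp.coeFn_const _ _ _), ofReal_re]
    positivity

theorem re_pow_quadratic_form (V : E →L[ℂ] E) (hV : IsVolterra V) (n : ℕ) (hn : 1 ≤ n)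
    (f : E) (hf : (f : ℝ → ℂ) =ᵐ[volume.restrict (Set.Icc (0:ℝ) 1)] fun x => 1 - 2 * (x : ℂ)) :
    (inner ℂ (((2:ℂ)⁻¹ • (V ^ n + ContinuousLinearMap.adjoint (V ^ n))) f) f : ℂ) =
      -(((n : ℂ) - 1) / (((n : ℂ) + 3) * (Nat.factorial (n + 1)))) ∧
    (2 ≤ n →
      (∃ g : E, (inner ℂ ((V ^ n) g) g : ℂ).re < 0) ∧ (∃ g : E, 0 < (inner ℂ ((V ^ n) g) g : ℂ).re)) :=
  re_pow_quadratic_form_general V hV n f hf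

end
end
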